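/- Γ_k equals the connected component of the set {λ ∈ ℝⁿ : S_k(λ) > 0} containing the positive orthant Γ_n. -/

import Mathlib

/-! `Γ_k` is open, and it is preconnected: from `λ ∈ Γ_k` the ray `λ + t (1, …, 1)`, `t ≥ 0`,
stays in `Γ_k` and enters the positive orthant. It remains to see that `Γ_k` is closed in
`{S_k > 0}`, i.e. that `S_1, …, S_{k-1} ≥ 0` and `S_k > 0` force `S_j > 0` for all `j ≤ k`.

Let `P = ∏ (X + λ_i)`, so that the coefficient of `X^(n-j)` is `e_j(λ)`. Its Hasse derivative
`Q` of order `n - k` has degree `k`, all its roots are real (Rolle), and its coefficient of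
`X^(k-j)` is a positive multiple of `e_j(λ)`. Nonnegative coefficients and `Q(0) > 0` leave no
root in `[0, ∞)`, so by Vieta every coefficient of `Q` is positive. The ray is handled the same
way: `e_j(λ + t)` is the value at `t` of the Hasse derivative of `P` of order `n - j`, whose
coefficients are nonnegative multiples of `e_0(λ), …, e_j(λ)`. -/

/-- Normalized `k`-th elementary symmetric function on `ℝⁿ`. -/
noncomputable def S (n k : ℕ) (x : Fin n → ℝ) : ℝ :=
  (∑ t ∈ Finset.univ.powersetCard k, ∏ i ∈ t, x i) / (n.choose k : ℝ)

/-- The `k`-positive (Gårding) cone `Γ_k ⊆ ℝⁿ`. -/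
def Gamma (n k : ℕ) : Set (Fin n → ℝ) :=
  {x | ∀ j, 1 ≤ j → j ≤ k → 0 < S n j x}

open Polynomial Finset

theorem IsPreconnected.eq_connectedComponentIn {X : Type*} [TopologicalSpace X] {U F : Set X}
    {x : X} (hU : IsPreconnected U) (hUo : IsOpen U) (hUF : U ⊆ F) (hcl : closure U ∩ F ⊆ U)
    (hx : x ∈ U) : U = _root_.connectedComponentIn F x := by
  refine (hU.subset_connectedComponentIn hx hUF).antisymm ?_
  have hcover : _root_.connectedComponentIn F x ⊆ U ∪ (closure U)ᶜ := fun y hy => by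
    by_cases hyU : y ∈ closure U
    · exact Or.inl (hcl ⟨hyU, connectedComponentIn_subset F x hy⟩)
    · exact Or.inr hyU
  exact isPreconnected_connectedComponentIn.subset_left_of_subset_union hUo
    isClosed_closure.isOpen_compl (disjoint_compl_right.mono_left subset_closure) hcover
    ⟨x, mem_connectedComponentIn (hUF hx), hx⟩

theorem Multiset.esymm_pos {R : Type*} [CommSemiring R] [PartialOrder R] [IsStrictOrderedRing R]
    {s : Multiset R} (hs : ∀ r ∈ s, 0 < r) {j : ℕ} (hj : j ≤ card s) : 0 < s.esymm j := by
  have hne : powersetCard j s ≠ 0 := by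
    rw [← Multiset.card_pos, card_powersetCard]
    exact Nat.choose_pos hj
  simpa [esymm] using sum_lt_sum_of_nonempty (f := fun _ => (0 : R)) (g := prod) hne
    fun t ht => prod_pos fun r hr => hs r (mem_of_le (mem_powersetCard.1 ht).1 hr)

namespace Polynomial

protected theorem Splits.derivative {p : ℝ[X]} (hp : p.Splits) : (derivative p).Splits := by
  rw [splits_iff_card_roots] at hp ⊢
  have := card_roots_le_derivative p
  have := (derivative p).card_roots'
  have := natDegree_derivative_le p
  omega

theorem hasseDeriv_eq_C_mul_iterate_derivative {K : Type*} [Field K] [CharZero K] (k : ℕ)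
    (p : K[X]) : hasseDeriv k p = C (k.factorial : K)⁻¹ * derivative^[k] p := by
  rw [← congrFun (factorial_smul_hasseDeriv (R := K) (k := k)) p, LinearMap.smul_apply,
    nsmul_eq_mul, ← C_eq_natCast, ← mul_assoc, ← C_mul,
    inv_mul_cancel₀ (Nat.cast_ne_zero.2 k.factorial_ne_zero), C_1, one_mul]

protected theorem Splits.hasseDeriv {p : ℝ[X]} (hp : p.Splits) (k : ℕ) :
    (hasseDeriv k p).Splits := by
  rw [hasseDeriv_eq_C_mul_iterate_derivative]
  refine Splits.C_mul ?_ _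
  induction k with
  | zero => exact hp
  | succ k ih => rw [Function.iterate_succ_apply']; exact ih.derivative

theorem eval_pos_of_coeff_nonneg {R : Type*} [Semiring R] [PartialOrder R] [IsOrderedRing R]
    {p : R[X]} (h : ∀ m, 0 ≤ p.coeff m) (h0 : 0 < p.coeff 0) {t : R} (ht : 0 ≤ t) :
    0 < p.eval t := by
  rw [eval_eq_sum_range]
  calc 0 < p.coeff 0 * t ^ 0 := by simpa using h0
    _ ≤ _ := single_le_sum (fun i _ => mul_nonneg (h i) (pow_nonneg ht i))
      (mem_range.2 (Nat.succ_pos _))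

theorem coeff_pos_of_splits_of_coeff_nonneg {p : ℝ[X]} (hp : p.Splits)
    (h : ∀ m, 0 ≤ p.coeff m) (h0 : 0 < p.coeff 0) {m : ℕ} (hm : m ≤ p.natDegree) :
    0 < p.coeff m := by
  have hp0 : p ≠ 0 := by rintro rfl; simp at h0
  have hroots : ∀ r ∈ p.roots, r < 0 := fun r hr => by
    by_contra! hr0
    exact (eval_pos_of_coeff_nonneg h h0 hr0).ne' ((mem_roots hp0).1 hr)
  have hlead : 0 < p.leadingCoeff := (h _).lt_of_ne' (leadingCoeff_ne_zero.2 hp0)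
  have hesymm : 0 < (p.roots.map Neg.neg).esymm (p.natDegree - m) := by
    refine Multiset.esymm_pos (fun r hr => ?_) ?_
    · obtain ⟨r, hr', rfl⟩ := Multiset.mem_map.1 hr
      exact neg_pos.2 (hroots r hr')
    · rw [Multiset.card_map, splits_iff_card_roots.1 hp]
      omega
  rw [coeff_eq_esymm_roots_of_splits hp hm, mul_assoc, ← Multiset.esymm_neg]
  exact mul_pos hlead hesymm

end Polynomial

namespace Multiset

theorem natDegree_prod_X_add_C {R : Type*} [CommSemiring R] [Nontrivial R] (s : Multiset R) :
    (s.map fun r => X + C r).prod.natDegree = card s := by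
  rw [natDegree_multiset_prod_of_monic _ (by simp [monic_X_add_C])]
  simp

theorem taylor_prod_X_add_C {R : Type*} [CommSemiring R] (s : Multiset R) (t : R) :
    taylor t (s.map fun r => X + C r).prod = ((s.map (· + t)).map fun r => X + C r).prod := by
  rw [taylor_apply, multiset_prod_comp, map_map, map_map]
  congr 1
  refine map_congr rfl fun r _ => ?_
  simp only [Function.comp_apply, add_comp, X_comp, C_comp, C_add]
  ring

theorem coeff_hasseDeriv_prod_X_add_C {R : Type*} [CommSemiring R] (s : Multiset R) {j m : ℕ}
    (hmj : m ≤ j) (hj : j ≤ card s) :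
    (hasseDeriv (card s - j) (s.map fun r => X + C r).prod).coeff m =
      (m + (card s - j)).choose (card s - j) * s.esymm (j - m) := by
  rw [hasseDeriv_coeff, prod_X_add_C_coeff _ (by omega),
    show card s - (m + (card s - j)) = j - m by omega]

theorem coeff_zero_hasseDeriv_prod_X_add_C {R : Type*} [CommSemiring R] (s : Multiset R) {j : ℕ}
    (hj : j ≤ card s) :
    (hasseDeriv (card s - j) (s.map fun r => X + C r).prod).coeff 0 = s.esymm j := by
  simp [coeff_hasseDeriv_prod_X_add_C s (Nat.zero_le j) hj]

theorem coeff_hasseDeriv_prod_X_add_C_nonneg {R : Type*} [CommSemiring R] [PartialOrder R]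
    [IsOrderedRing R] [Nontrivial R] {s : Multiset R} {j : ℕ} (hj : j ≤ card s)
    (h : ∀ i ≤ j, 0 ≤ s.esymm i) (m : ℕ) :
    0 ≤ (hasseDeriv (card s - j) (s.map fun r => X + C r).prod).coeff m := by
  rcases le_or_gt m j with hmj | hjm
  · rw [coeff_hasseDeriv_prod_X_add_C s hmj hj]
    exact mul_nonneg (Nat.cast_nonneg _) (h _ (Nat.sub_le j m))
  · rw [hasseDeriv_coeff, coeff_eq_zero_of_natDegree_lt (by rw [natDegree_prod_X_add_C]; omega),
      mul_zero]

theorem esymm_pos_of_esymm_nonneg {s : Multiset ℝ} {k : ℕ} (hk : k ≤ card s)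
    (h : ∀ j ≤ k, 0 ≤ s.esymm j) (hk0 : 0 < s.esymm k) {j : ℕ} (hj : j ≤ k) :
    0 < s.esymm j := by
  set Q := hasseDeriv (card s - k) (s.map fun r => X + C r).prod
  have hsplits : Q.Splits :=
    (Splits.multisetProd fun p hp => by
      obtain ⟨r, -, rfl⟩ := mem_map.1 hp
      exact Splits.X_add_C r).hasseDeriv _
  have hdeg : Q.natDegree = k := by
    rw [natDegree_hasseDeriv, natDegree_prod_X_add_C]
    omega
  have hQ : 0 < Q.coeff (k - j) :=
    coeff_pos_of_splits_of_coeff_nonneg hsplits (coeff_hasseDeriv_prod_X_add_C_nonneg hk h)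
      (by rwa [coeff_zero_hasseDeriv_prod_X_add_C s hk]) (by omega)
  rw [coeff_hasseDeriv_prod_X_add_C s (Nat.sub_le k j) hk, Nat.sub_sub_self hj] at hQ
  exact pos_of_mul_pos_right hQ (Nat.cast_nonneg _)

theorem esymm_map_add_pos {s : Multiset ℝ} {k : ℕ} (hk : k ≤ card s)
    (h : ∀ j ≤ k, 0 < s.esymm j) {t : ℝ} (ht : 0 ≤ t) {j : ℕ} (hj : j ≤ k) :
    0 < (s.map (· + t)).esymm j := by
  have htaylor : (s.map (· + t)).esymm j =
      (hasseDeriv (card s - j) (s.map fun r => X + C r).prod).eval t := by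
    rw [← taylor_coeff, taylor_prod_X_add_C, prod_X_add_C_coeff _ (by simp), card_map,
      Nat.sub_sub_self (hj.trans hk)]
  rw [htaylor]
  exact eval_pos_of_coeff_nonneg
    (coeff_hasseDeriv_prod_X_add_C_nonneg (hj.trans hk) fun i hi => (h i (hi.trans hj)).le)
    (by rw [coeff_zero_hasseDeriv_prod_X_add_C s (hj.trans hk)]; exact h j hj) ht

end Multiset

theorem continuous_esymm_map_val {ι R : Type*} [CommSemiring R] [TopologicalSpace R]
    [IsTopologicalSemiring R] (s : Finset ι) (j : ℕ) :
    Continuous fun x : ι → R => (s.val.map x).esymm j := by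
  simp_rw [Finset.esymm_map_val]
  fun_prop

theorem S_eq_esymm (n j : ℕ) (x : Fin n → ℝ) :
    S n j x = (univ.val.map x).esymm j / n.choose j := by
  rw [Finset.esymm_map_val]
  rfl

theorem continuous_S (n j : ℕ) : Continuous (S n j) := by
  unfold S
  fun_prop

theorem isOpen_Gamma (n k : ℕ) : IsOpen (Gamma n k) := by
  have hGamma : Gamma n k = ⋂ j ∈ Finset.Icc 1 k, {x | 0 < S n j x} := by
    ext x
    simp [Gamma]
  rw [hGamma]
  exact isOpen_biInter_finset fun j _ => isOpen_lt continuous_const (continuous_S n j)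

section Gamma

variable {n k : ℕ}

theorem S_pos_iff {j : ℕ} (hj : j ≤ n) {x : Fin n → ℝ} :
    0 < S n j x ↔ 0 < (univ.val.map x).esymm j := by
  rw [S_eq_esymm, div_pos_iff_of_pos_right (by exact_mod_cast Nat.choose_pos hj)]

theorem mem_Gamma_iff (hkn : k ≤ n) {x : Fin n → ℝ} :
    x ∈ Gamma n k ↔ ∀ j ≤ k, 0 < (univ.val.map x).esymm j := by
  refine ⟨fun hx j hj => ?_, fun hx j hj1 hj => (S_pos_iff (hj.trans hkn)).2 (hx j hj)⟩
  rcases j.eq_zero_or_pos with rfl | hj0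
  · simp [Multiset.esymm]
  · exact (S_pos_iff (hj.trans hkn)).1 (hx j hj0 hj)

theorem mem_Gamma_of_forall_pos (hkn : k ≤ n) {x : Fin n → ℝ} (hx : ∀ i, 0 < x i) :
    x ∈ Gamma n k :=
  (mem_Gamma_iff hkn).2 fun _ hj =>
    Multiset.esymm_pos (by simpa using hx) (by simpa using hj.trans hkn)

theorem add_const_mem_Gamma (hkn : k ≤ n) {x : Fin n → ℝ} (hx : x ∈ Gamma n k) {t : ℝ}
    (ht : 0 ≤ t) : (fun i => x i + t) ∈ Gamma n k := by
  rw [mem_Gamma_iff hkn] at hx ⊢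
  intro j hj
  have := Multiset.esymm_map_add_pos (by simpa using hkn) hx ht hj
  rwa [Multiset.map_map] at this

theorem closure_Gamma_subset (hkn : k ≤ n) :
    closure (Gamma n k) ⊆ {x | ∀ j ≤ k, 0 ≤ (univ.val.map x).esymm j} := by
  refine closure_minimal (fun x hx j hj => ((mem_Gamma_iff hkn).1 hx j hj).le) ?_
  simp only [Set.ofPred_forall]
  exact isClosed_iInter fun j => isClosed_iInter fun _ =>
    isClosed_le continuous_const (continuous_esymm_map_val univ j)

theorem closure_Gamma_inter_subset (hkn : k ≤ n) :
    closure (Gamma n k) ∩ {x | 0 < S n k x} ⊆ Gamma n k := fun x ⟨hcl, hk⟩ =>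
  (mem_Gamma_iff hkn).2 fun _ hj =>
    Multiset.esymm_pos_of_esymm_nonneg (by simpa using hkn) (closure_Gamma_subset hkn hcl)
      ((S_pos_iff hkn).1 hk) hj

theorem isPreconnected_Gamma (hkn : k ≤ n) : IsPreconnected (Gamma n k) := by
  set O : Set (Fin n → ℝ) := Set.univ.pi fun _ => Set.Ioi 0
  have hO : O ⊆ Gamma n k := fun x hx => mem_Gamma_of_forall_pos hkn fun i => hx i trivial
  refine isPreconnected_of_forall (fun _ => 1) fun x hx => ?_
  set ray := (fun (t : ℝ) i => x i + t) '' Set.Ici 0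
  obtain ⟨T, hT0, hT⟩ : ∃ T : ℝ, 0 ≤ T ∧ (fun i => x i + T) ∈ O := by
    refine ⟨‖x‖ + 1, by positivity, fun i _ => ?_⟩
    have := abs_le.1 ((Real.norm_eq_abs _).symm ▸ norm_le_pi_norm x i)
    simp only [Set.mem_Ioi]
    linarith
  have hray : IsPreconnected ray :=
    isPreconnected_Ici.image _ (Continuous.continuousOn (by fun_prop))
  refine ⟨ray ∪ O, Set.union_subset ?_ hO, Or.inr fun _ _ => Set.mem_Ioi.2 one_pos,
    Or.inl ⟨0, Set.mem_Ici.2 le_rfl, by simp⟩,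
    hray.union _ ⟨T, hT0, rfl⟩ hT (convex_pi fun _ _ => convex_Ioi 0).isPreconnected⟩
  exact Set.image_subset_iff.2 fun t ht => add_const_mem_Gamma hkn hx ht

end Gamma

theorem Gamma_eq_connectedComponent (n k : ℕ) (hk1 : 1 ≤ k) (hkn : k ≤ n)
    (x : Fin n → ℝ) (hx : ∀ i, 0 < x i) :
    Gamma n k = connectedComponentIn {lam : Fin n → ℝ | 0 < S n k lam} x :=
  (isPreconnected_Gamma hkn).eq_connectedComponentIn (isOpen_Gamma n k)
    (fun _ hy => hy k hk1 le_rfl) (closure_Gamma_inter_subset hkn)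
    (mem_Gamma_of_forall_pos hkn hx)
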